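/- The value V(π/4) = 2π ∫₀^{π/4} ∫_{−π/2}^{π/2} τ · sin(τ cos v) dv dτ satisfies 1.9473 < V(π/4) < 1.9474. (This is the volume Vol(B(R₂)) ≈ 1.94735865 of the ball of radius R₂ = π/4 in equation (2.9) of the paper.) -/

import Mathlib

/-!
On `[0, ∞)` the Taylor polynomials of `sin` bound it alternately from above and below; this
follows by integrating `cos ≤ 1` repeatedly. Since `τ cos v ≥ 0` on the domain of integration,
`V(ρ)` is squeezed between the integrals of consecutive Taylor polynomials, which are computed
in closed form from the Wallis integrals `∫ cos ^ (2k+1) = 2 · 4^k k!² / (2k+1)!` over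
`[-π/2, π/2]`. Three and four terms give polynomials in `π` that bracket `V(π/4) ≈ 1.947358`
to within `1.5 · 10⁻⁵`.
-/

open Real

/-- The volume of the geodesic ball of radius `ρ` in `S² × ℝ` geometry
(Theorem 2.4 of the paper). -/
noncomputable def ballVol (ρ : ℝ) : ℝ :=
  2 * π * ∫ τ in (0 : ℝ)..ρ, ∫ v in (-(π / 2))..(π / 2), τ * Real.sin (τ * Real.cos v)

open Finset Set Nat

lemma nonneg_of_hasDerivAt_nonneg {f f' : ℝ → ℝ} (hf : ∀ x, HasDerivAt f (f' x) x)
    (h₀ : f 0 = 0) (h' : ∀ x, 0 < x → 0 ≤ f' x) {x : ℝ} (hx : 0 ≤ x) : 0 ≤ f x := by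
  have hmono : MonotoneOn f (Ici 0) := by
    refine monotoneOn_of_hasDerivWithinAt_nonneg (convex_Ici 0)
      (fun y _ ↦ (hf y).continuousAt.continuousWithinAt)
      (fun y _ ↦ (hf y).hasDerivWithinAt) fun y hy ↦ ?_
    rw [interior_Ici] at hy
    exact h' y hy
  simpa [h₀] using hmono self_mem_Ici (mem_Ici.2 hx) hx

open intervalIntegral in
lemma intervalIntegral_integral_mono {f g : ℝ → ℝ → ℝ} (hf : Continuous (Function.uncurry f))
    (hg : Continuous (Function.uncurry g)) {a b c d : ℝ} (hab : a ≤ b) (hcd : c ≤ d)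
    (h : ∀ x ∈ Icc a b, ∀ y ∈ Icc c d, f x y ≤ g x y) :
    ∫ x in a..b, ∫ y in c..d, f x y ≤ ∫ x in a..b, ∫ y in c..d, g x y := by
  refine integral_mono_on hab
    ((continuous_parametric_intervalIntegral_of_continuous' hf c d).intervalIntegrable a b)
    ((continuous_parametric_intervalIntegral_of_continuous' hg c d).intervalIntegrable a b)
    fun x hx ↦ integral_mono_on hcd ?_ ?_ (h x hx)
  · exact (hf.comp (Continuous.prodMk_right x)).intervalIntegrable c d
  · exact (hg.comp (Continuous.prodMk_right x)).intervalIntegrable c d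

noncomputable def sinTaylor (n : ℕ) (x : ℝ) : ℝ :=
  ∑ k ∈ range n, (-1) ^ k * x ^ (2 * k + 1) / (2 * k + 1)!

noncomputable def cosTaylor (n : ℕ) (x : ℝ) : ℝ :=
  ∑ k ∈ range n, (-1) ^ k * x ^ (2 * k) / (2 * k)!

lemma sinTaylor_zero_right (n : ℕ) : sinTaylor n 0 = 0 := by
  simp [sinTaylor]

lemma cosTaylor_succ_zero_right (n : ℕ) : cosTaylor (n + 1) 0 = 1 := by
  simp [cosTaylor, sum_range_succ']

lemma hasDerivAt_sinTaylor (n : ℕ) (x : ℝ) :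
    HasDerivAt (sinTaylor n) (cosTaylor n x) x := by
  unfold sinTaylor cosTaylor
  refine HasDerivAt.fun_sum fun k _ ↦ ?_
  refine (((hasDerivAt_pow (2 * k + 1) x).const_mul ((-1 : ℝ) ^ k)).div_const
    ((2 * k + 1)! : ℝ)).congr_deriv ?_
  rw [factorial_succ]
  push_cast
  field_simp

lemma hasDerivAt_cosTaylor_succ (n : ℕ) (x : ℝ) :
    HasDerivAt (cosTaylor (n + 1)) (-sinTaylor n x) x := by
  have h : cosTaylor (n + 1) = fun y ↦
      1 + ∑ k ∈ range n, (-1 : ℝ) ^ (k + 1) * y ^ (2 * k + 2) / (2 * k + 2)! := by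
    ext y
    simp [cosTaylor, sum_range_succ', mul_add, add_comm]
  rw [h, sinTaylor, ← sum_neg_distrib]
  refine (HasDerivAt.fun_sum fun k _ ↦ ?_).const_add 1
  refine (((hasDerivAt_pow (2 * k + 2) x).const_mul ((-1 : ℝ) ^ (k + 1))).div_const
    ((2 * k + 2)! : ℝ)).congr_deriv ?_
  rw [show 2 * k + 2 = (2 * k + 1) + 1 by ring, factorial_succ]
  push_cast
  field_simp
  ring

lemma continuous_sinTaylor (n : ℕ) : Continuous (sinTaylor n) :=
  continuous_iff_continuousAt.2 fun x ↦ (hasDerivAt_sinTaylor n x).continuousAt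

lemma cos_sin_sub_taylor_alternating (n : ℕ) {x : ℝ} (hx : 0 ≤ x) :
    0 ≤ (-1) ^ (n + 1) * (cos x - cosTaylor (n + 1) x) ∧
      0 ≤ (-1) ^ (n + 1) * (sin x - sinTaylor (n + 1) x) := by
  induction n generalizing x with
  | zero =>
    simp only [zero_add, pow_one, cosTaylor, sinTaylor, sum_range_one]
    norm_num
    exact ⟨cos_le_one x, sin_le hx⟩
  | succ n ih =>
    have hcos : ∀ {y : ℝ}, 0 ≤ y → 0 ≤ (-1) ^ (n + 2) * (cos y - cosTaylor (n + 2) y) := by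
      refine fun hy ↦ nonneg_of_hasDerivAt_nonneg
        (fun y ↦ (((hasDerivAt_cos y).sub (hasDerivAt_cosTaylor_succ (n + 1) y)).const_mul _))
        (by simp [cosTaylor_succ_zero_right]) (fun y hy ↦ ?_) hy
      convert (ih hy.le).2 using 1
      ring
    refine ⟨hcos hx, nonneg_of_hasDerivAt_nonneg
      (fun y ↦ (((hasDerivAt_sin y).sub (hasDerivAt_sinTaylor (n + 2) y)).const_mul _))
      (by simp [sinTaylor_zero_right]) (fun y hy ↦ hcos hy.le) hx⟩

lemma sin_le_sinTaylor_two_mul_add_one (n : ℕ) {x : ℝ} (hx : 0 ≤ x) :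
    sin x ≤ sinTaylor (2 * n + 1) x := by
  have := (cos_sin_sub_taylor_alternating (2 * n) hx).2
  rw [pow_succ, pow_mul] at this
  norm_num at this
  linarith

lemma sinTaylor_two_mul_add_two_le_sin (n : ℕ) {x : ℝ} (hx : 0 ≤ x) :
    sinTaylor (2 * n + 2) x ≤ sin x := by
  have := (cos_sin_sub_taylor_alternating (2 * n + 1) hx).2
  rw [pow_succ, pow_succ, pow_mul] at this
  norm_num at this
  linarith

lemma integral_cos_pow_odd (k : ℕ) :
    ∫ v in -(π / 2)..π / 2, cos v ^ (2 * k + 1) = 2 * 4 ^ k * (k ! : ℝ) ^ 2 / (2 * k + 1)! := by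
  induction k with
  | zero => norm_num
  | succ k ih =>
    rw [show 2 * (k + 1) + 1 = 2 * k + 1 + 2 by ring, integral_cos_pow, ih]
    simp only [cos_pi_div_two, cos_neg, ne_eq, add_eq_zero, one_ne_zero, and_false,
      not_false_eq_true, zero_pow, zero_mul, sub_self, zero_div, zero_add]
    have hfact : ((2 * k + 1 + 2)! : ℝ) = (2 * k + 3) * (2 * k + 2) * (2 * k + 1)! := by
      push_cast [factorial_succ]
      ring
    rw [hfact, factorial_succ k]
    push_cast
    field_simp
    ring

lemma integral_integral_mul_sinTaylor (n : ℕ) (ρ : ℝ) :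
    ∫ τ in (0 : ℝ)..ρ, ∫ v in -(π / 2)..π / 2, τ * sinTaylor n (τ * cos v) =
      ∑ k ∈ range n, (-1) ^ k * ρ ^ (2 * k + 3) * 2 * 4 ^ k * (k ! : ℝ) ^ 2 /
        ((2 * k + 3) * ((2 * k + 1)! : ℝ) ^ 2) := by
  have hinner : ∀ τ : ℝ, ∫ v in -(π / 2)..π / 2, τ * sinTaylor n (τ * cos v) =
      ∑ k ∈ range n, (-1) ^ k * 2 * 4 ^ k * (k ! : ℝ) ^ 2 / ((2 * k + 1)! : ℝ) ^ 2 *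
        τ ^ (2 * k + 2) := by
    intro τ
    simp_rw [sinTaylor, mul_sum]
    rw [intervalIntegral.integral_finsetSum fun k _ ↦ by
      apply Continuous.intervalIntegrable; fun_prop]
    refine sum_congr rfl fun k _ ↦ ?_
    have hterm : ∀ v, τ * ((-1) ^ k * (τ * cos v) ^ (2 * k + 1) / (2 * k + 1)!) =
        (-1) ^ k * τ ^ (2 * k + 2) / (2 * k + 1)! * cos v ^ (2 * k + 1) := fun v ↦ by ring
    simp_rw [hterm, intervalIntegral.integral_const_mul, integral_cos_pow_odd]
    field_simp
  simp_rw [hinner]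
  rw [intervalIntegral.integral_finsetSum fun k _ ↦ by
    apply Continuous.intervalIntegrable; fun_prop]
  refine sum_congr rfl fun k _ ↦ ?_
  rw [intervalIntegral.integral_const_mul, integral_pow]
  push_cast
  field_simp
  ring

lemma integral_integral_mul_comp_mul_cos_mono {F G : ℝ → ℝ} (hF : Continuous F)
    (hG : Continuous G) {ρ : ℝ} (hρ : 0 ≤ ρ) (h : ∀ x, 0 ≤ x → F x ≤ G x) :
    ∫ τ in (0 : ℝ)..ρ, ∫ v in -(π / 2)..π / 2, τ * F (τ * cos v) ≤
      ∫ τ in (0 : ℝ)..ρ, ∫ v in -(π / 2)..π / 2, τ * G (τ * cos v) := by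
  refine intervalIntegral_integral_mono (by fun_prop) (by fun_prop) hρ (by linarith [pi_pos])
    fun τ hτ v hv ↦ ?_
  exact mul_le_mul_of_nonneg_left (h _ (mul_nonneg hτ.1 (cos_nonneg_of_mem_Icc hv))) hτ.1

noncomputable def ballVolPartialSum (n : ℕ) (ρ : ℝ) : ℝ :=
  2 * π * ∑ k ∈ range n, (-1) ^ k * ρ ^ (2 * k + 3) * 2 * 4 ^ k * (k ! : ℝ) ^ 2 /
    ((2 * k + 3) * ((2 * k + 1)! : ℝ) ^ 2)

lemma ballVol_le_ballVolPartialSum (n : ℕ) {ρ : ℝ} (hρ : 0 ≤ ρ) :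
    ballVol ρ ≤ ballVolPartialSum (2 * n + 1) ρ := by
  rw [ballVolPartialSum, ← integral_integral_mul_sinTaylor]
  exact mul_le_mul_of_nonneg_left (integral_integral_mul_comp_mul_cos_mono continuous_sin
    (continuous_sinTaylor _) hρ fun x hx ↦ sin_le_sinTaylor_two_mul_add_one n hx) two_pi_pos.le

lemma ballVolPartialSum_le_ballVol (n : ℕ) {ρ : ℝ} (hρ : 0 ≤ ρ) :
    ballVolPartialSum (2 * n + 2) ρ ≤ ballVol ρ := by
  rw [ballVolPartialSum, ← integral_integral_mul_sinTaylor]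
  exact mul_le_mul_of_nonneg_left (integral_integral_mul_comp_mul_cos_mono
    (continuous_sinTaylor _) continuous_sin hρ fun x hx ↦ sinTaylor_two_mul_add_two_le_sin n hx)
    two_pi_pos.le

lemma ballVolPartialSum_four_pi_div_four :
    ballVolPartialSum 4 (π / 4) =
      π ^ 4 / 48 - π ^ 6 / 11520 + π ^ 8 / 6451200 - π ^ 10 / 6502809600 := by
  simp only [ballVolPartialSum, sum_range_succ, sum_range_zero, factorial]
  push_cast
  ring

lemma ballVolPartialSum_three_pi_div_four :
    ballVolPartialSum 3 (π / 4) = π ^ 4 / 48 - π ^ 6 / 11520 + π ^ 8 / 6451200 := by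
  simp only [ballVolPartialSum, sum_range_succ, sum_range_zero, factorial]
  push_cast
  ring

lemma lt_ballVolPartialSum_four_pi_div_four : 1.9473 < ballVolPartialSum 4 (π / 4) := by
  have h4 := pow_lt_pow_left₀ pi_gt_d6 (by norm_num) (by norm_num : 4 ≠ 0)
  have h6 := pow_lt_pow_left₀ pi_lt_d6 pi_pos.le (by norm_num : 6 ≠ 0)
  have h8 := pow_lt_pow_left₀ pi_gt_d6 (by norm_num) (by norm_num : 8 ≠ 0)
  have h10 := pow_lt_pow_left₀ pi_lt_d6 pi_pos.le (by norm_num : 10 ≠ 0)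
  rw [ballVolPartialSum_four_pi_div_four]
  norm_num at h4 h6 h8 h10 ⊢
  linarith

lemma ballVolPartialSum_three_pi_div_four_lt : ballVolPartialSum 3 (π / 4) < 1.9474 := by
  have h4 := pow_lt_pow_left₀ pi_lt_d6 pi_pos.le (by norm_num : 4 ≠ 0)
  have h6 := pow_lt_pow_left₀ pi_gt_d6 (by norm_num) (by norm_num : 6 ≠ 0)
  have h8 := pow_lt_pow_left₀ pi_lt_d6 pi_pos.le (by norm_num : 8 ≠ 0)
  rw [ballVolPartialSum_three_pi_div_four]
  norm_num at h4 h6 h8 ⊢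
  linarith

/-- The volume of the ball of radius `R₂ = π/4` (equation (2.9) of the paper):
`Vol(B(R₂)) ≈ 1.94735865`. -/
theorem ballVol_pi_div_four_bounds :
    1.9473 < ballVol (π / 4) ∧ ballVol (π / 4) < 1.9474 := by
  have hρ : 0 ≤ π / 4 := by positivity
  exact ⟨lt_ballVolPartialSum_four_pi_div_four.trans_le (ballVolPartialSum_le_ballVol 1 hρ),
    (ballVol_le_ballVolPartialSum 1 hρ).trans_lt ballVolPartialSum_three_pi_div_four_lt⟩
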